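/- Let k, q, N be natural numbers with (k+1)·(q+1) ≤ N, and let C be a finite set of candidates with |C| ≥ k+1. Then there exists a vote tally v : C → ℕ with ∑_{c ∈ C} v(c) = N such that at least k+1 candidates c satisfy v(c) > q. -/
import Mathlib


/-- Minimality of the Droop quota: if `(k+1)*(q+1) ≤ N` then there is a tally
of exactly `N` votes in which at least `k+1` candidates strictly exceed `q`. -/
theorem quota_too_small_admits_more_than_k_winners {α : Type*} [DecidableEq α]
    (k q N : ℕ) (h : (k + 1) * (q + 1) ≤ N)
    (C : Finset α) (hC : k + 1 ≤ C.card) :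
    ∃ v : α → ℕ, ∑ c ∈ C, v c = N ∧
      k + 1 ≤ (C.filter (fun c => v c > q)).card := by
  obtain ⟨S, hSC, hScard⟩ := Finset.exists_subset_card_eq hC
  have hSne : S.Nonempty := Finset.card_pos.mp (by omega)
  obtain ⟨c0, hc0⟩ := hSne
  set v : α → ℕ := fun c => if c = c0 then N - k * (q + 1) else if c ∈ S then q + 1 else 0
    with hv
  have hk : k * (q + 1) + (q + 1) ≤ N := by nlinarith
  refine ⟨v, ?_, ?_⟩
  · have h0 : ∀ x ∈ C, x ∉ S → v x = 0 := by
      intro x _ hxS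
      have hx0 : x ≠ c0 := fun h' => hxS (h' ▸ hc0)
      simp [hv, hx0, hxS]
    rw [← Finset.sum_subset hSC h0, ← Finset.add_sum_erase _ _ hc0]
    have he : ∑ c ∈ S.erase c0, v c = k * (q + 1) := by
      have : ∀ x ∈ S.erase c0, v x = q + 1 := by
        intro x hx
        simp only [hv]
        rw [if_neg (Finset.ne_of_mem_erase hx), if_pos (Finset.mem_of_mem_erase hx)]
      rw [Finset.sum_congr rfl this, Finset.sum_const, smul_eq_mul,
        Finset.card_erase_of_mem hc0, hScard]
      rw [Nat.add_sub_cancel]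
    rw [he]
    simp only [hv, if_pos rfl]
    omega
  · refine le_trans (le_of_eq hScard.symm) (Finset.card_le_card ?_)
    intro x hx
    rw [Finset.mem_filter]
    refine ⟨hSC hx, ?_⟩
    simp only [hv]
    by_cases hx0 : x = c0
    · rw [if_pos hx0]; omega
    · rw [if_neg hx0, if_pos hx]; omega
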